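/- arXiv:2205.08266 — 2 statements merged into one kernel-verified Lean document; each statement's English description precedes it below -/
import Mathlib

section
/- Let m0 ≥ 0 and let f be a nonnegative non-increasing function on [m0, ∞) satisfying f(ℓ) ≤ M0 (ℓ+1)^α / (ℓ−m)^β · f(m)^σ for all ℓ > m ≥ m0, where M0, α, β ≥ 0, 0 ≤ α < β, and σ > 1. Then f(m0 + d) = 0, where d = [2 f(m0)^σ (m0 + M0 + 2)^{(2α+2β+1)/(σ−1) + β/(σ−1)² + 2α + β + 1}]^{1/(β−α)} + 2. -/
open Real


lemma iter_core (m0 C β σ d : ℝ) (f : ℝ → ℝ)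
    (hC : 0 ≤ C) (hβ : 0 < β) (hσ : 1 < σ) (hd : 0 < d)
    (hF : 0 < f m0)
    (hf_nonneg : ∀ x, m0 ≤ x → 0 ≤ f x)
    (hf_mono : ∀ x y, m0 ≤ x → x ≤ y → f y ≤ f x)
    (hiter : ∀ ℓ m, m0 ≤ m → m < ℓ → ℓ ≤ m0 + d → f ℓ ≤ C / (ℓ - m) ^ β * f m ^ σ)
    (hkey : C * f m0 ^ (σ - 1) * 2 ^ (β * σ / (σ - 1)) ≤ d ^ β) :
    f (m0 + d) = 0 := by
  have hσ1 : (0:ℝ) < σ - 1 := by linarith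
  set F := f m0 with hFdef
  set r : ℝ := 2 ^ (β / (σ - 1)) with hrdef
  have hr1 : 1 < r := by
    rw [hrdef]
    exact (Real.one_lt_rpow_iff_of_pos (by norm_num)).mpr (Or.inl ⟨by norm_num, by positivity⟩)
  have hr0 : 0 < r := lt_trans one_pos hr1
  have hrn : ∀ k : ℕ, r ^ k = (2:ℝ) ^ (β / (σ - 1) * k) := by
    intro k
    rw [hrdef, ← Real.rpow_natCast ((2:ℝ) ^ (β / (σ - 1))) k,
      ← Real.rpow_mul (by norm_num : (0:ℝ) ≤ 2)]
  have h2k : ∀ k : ℕ, ((2:ℝ) ^ k) ^ β = (2:ℝ) ^ ((k:ℝ) * β) := by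
    intro k
    rw [← Real.rpow_natCast (2:ℝ) k, ← Real.rpow_mul (by norm_num : (0:ℝ) ≤ 2)]
  have claim : ∀ n : ℕ, f (m0 + d - d / 2 ^ n) ≤ F / r ^ n := by
    intro n
    induction n with
    | zero => simp [hFdef]
    | succ n ih =>
      have h2n : (0:ℝ) < 2 ^ n := by positivity
      have h2n1 : (0:ℝ) < 2 ^ (n+1) := by positivity
      have h12n : (1:ℝ) ≤ 2 ^ n := one_le_pow₀ (by norm_num)
      set m := m0 + d - d / 2 ^ n with hm
      set ℓ := m0 + d - d / 2 ^ (n+1) with hl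
      have hδ : ℓ - m = d / 2 ^ (n+1) := by
        rw [hm, hl, pow_succ]
        field_simp
        ring
      have hm0m : m0 ≤ m := by
        rw [hm]
        have : d / 2 ^ n ≤ d := by
          rw [div_le_iff₀ h2n]; nlinarith
        linarith
      have hmℓ : m < ℓ := by
        rw [hm, hl]
        have : d / 2 ^ (n+1) < d / 2 ^ n := by
          apply div_lt_div_of_pos_left hd h2n
          rw [pow_succ]; nlinarith
        linarith
      have hℓd : ℓ ≤ m0 + d := by
        rw [hl]
        have : 0 < d / 2 ^ (n+1) := div_pos hd h2n1
        linarith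
      have h1 := hiter ℓ m hm0m hmℓ hℓd
      rw [hδ] at h1
      have h2 : f m ^ σ ≤ (F / r ^ n) ^ σ :=
        Real.rpow_le_rpow (hf_nonneg m hm0m) ih (by linarith)
      have h3 : f ℓ ≤ C / (d / 2 ^ (n+1)) ^ β * (F / r ^ n) ^ σ :=
        le_trans h1 (mul_le_mul_of_nonneg_left h2 (by positivity))
      refine le_trans h3 ?_
      rw [Real.div_rpow hd.le h2n1.le, Real.div_rpow hF.le (by positivity),
        h2k (n+1), hrn n, hrn (n+1),
        ← Real.rpow_mul (by norm_num : (0:ℝ) ≤ 2) (β / (σ - 1) * (n:ℝ)) σ,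
        div_div_eq_mul_div, div_mul_div_comm,
        div_le_div_iff₀ (by positivity) (by positivity)]
      push_cast
      have hprod : (2:ℝ) ^ (((n:ℝ) + 1) * β) * 2 ^ (β / (σ - 1) * ((n:ℝ) + 1))
          = 2 ^ (β * σ / (σ - 1)) * 2 ^ (β / (σ - 1) * (n:ℝ) * σ) := by
        rw [← Real.rpow_add (by norm_num : (0:ℝ) < 2),
          ← Real.rpow_add (by norm_num : (0:ℝ) < 2)]
        congr 1
        field_simp
        ring
      have hFσ : F ^ (σ - 1) * F = F ^ σ := by
        rw [← Real.rpow_add_one hF.ne', sub_add_cancel]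
      calc C * 2 ^ (((n:ℝ) + 1) * β) * F ^ σ * 2 ^ (β / (σ - 1) * ((n:ℝ) + 1))
          = (C * F ^ (σ - 1) * 2 ^ (β * σ / (σ - 1))) * (F * 2 ^ (β / (σ - 1) * (n:ℝ) * σ)) := by
            rw [← hFσ]; linear_combination (C * (F ^ (σ - 1) * F)) * hprod
        _ ≤ d ^ β * (F * 2 ^ (β / (σ - 1) * (n:ℝ) * σ)) :=
            mul_le_mul_of_nonneg_right hkey (by positivity)
        _ = F * (d ^ β * 2 ^ (β / (σ - 1) * (n:ℝ) * σ)) := by ring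
  have htend : Filter.Tendsto (fun n : ℕ => F / r ^ n) Filter.atTop (nhds 0) := by
    have h := (tendsto_pow_atTop_nhds_zero_of_lt_one (by positivity : (0:ℝ) ≤ r⁻¹)
      (inv_lt_one_of_one_lt₀ hr1)).const_mul F
    simpa [div_eq_mul_inv, inv_pow] using h
  have hle : ∀ n : ℕ, f (m0 + d) ≤ F / r ^ n := by
    intro n
    have h2n : (0:ℝ) < 2 ^ n := by positivity
    have h12n : (1:ℝ) ≤ 2 ^ n := one_le_pow₀ (by norm_num)
    have hdn : 0 < d / 2 ^ n := div_pos hd h2n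
    have hdn' : d / 2 ^ n ≤ d := by
      rw [div_le_iff₀ h2n]; nlinarith
    refine le_trans (hf_mono _ _ (by linarith) (by linarith)) (claim n)
  have h0 : f (m0 + d) ≤ 0 := ge_of_tendsto' htend hle
  have h1 : 0 ≤ f (m0 + d) := hf_nonneg _ (by linarith)
  linarith


set_option maxHeartbeats 1000000 in
/-- De Giorgi type iteration lemma (Appendix Lemma 5.1 of the paper). -/
theorem stmt_0 (m0 M0 α β σ : ℝ) (f : ℝ → ℝ)
    (hm0 : 0 ≤ m0) (hM0 : 0 ≤ M0) (hα : 0 ≤ α) (hβ : 0 ≤ β) (hαβ : α < β) (hσ : 1 < σ)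
    (hf_nonneg : ∀ x, m0 ≤ x → 0 ≤ f x)
    (hf_mono : ∀ x y, m0 ≤ x → x ≤ y → f y ≤ f x)
    (hiter : ∀ ℓ m, m0 ≤ m → m < ℓ →
      f ℓ ≤ M0 * (ℓ + 1) ^ α / (ℓ - m) ^ β * (f m) ^ σ) :
    f (m0 + ((2 * (f m0) ^ σ *
        (m0 + M0 + 2) ^ ((2*α + 2*β + 1)/(σ - 1) + β/(σ - 1)^2 + 2*α + β + 1))
          ^ (1/(β - α)) + 2)) = 0 := by
  have hσ1 : (0:ℝ) < σ - 1 := by linarith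
  have hβα : (0:ℝ) < β - α := by linarith
  have hβ0 : (0:ℝ) < β := lt_of_le_of_lt hα hαβ
  have hF0 : 0 ≤ f m0 := hf_nonneg m0 le_rfl
  set K := m0 + M0 + 2 with hKdef
  have hK2 : (2:ℝ) ≤ K := by linarith
  have hK0 : (0:ℝ) < K := by linarith
  set E1 := 2*α + β + 1 + β/(σ-1) with hE1def
  have hE1nn : 0 ≤ E1 := by
    have : 0 ≤ β/(σ-1) := by positivity
    rw [hE1def]; linarith
  have hEeq : (2*α + 2*β + 1)/(σ - 1) + β/(σ - 1)^2 + 2*α + β + 1 = E1*σ/(σ-1) := by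
    rw [hE1def]; field_simp; ring
  rw [hEeq]
  set X := 2 * (f m0) ^ σ * K ^ (E1*σ/(σ-1)) with hXdef
  have hXnn : 0 ≤ X := by
    have : 0 ≤ (f m0) ^ σ := Real.rpow_nonneg hF0 σ
    positivity
  set D0 := X ^ (1/(β-α)) with hD0def
  have hD0nn : 0 ≤ D0 := Real.rpow_nonneg hXnn _
  set d := D0 + 2 with hddef
  have hd : (0:ℝ) < d := by rw [hddef]; linarith
  have hd2 : (2:ℝ) ≤ d := by rw [hddef]; linarith
  show f (m0 + d) = 0
  rcases eq_or_lt_of_le hF0 with hF | hF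
  · -- f m0 = 0
    have h := hiter (m0 + d) m0 le_rfl (by linarith)
    rw [← hF, Real.zero_rpow (by positivity : σ ≠ 0)] at h
    have h1 := hf_nonneg (m0 + d) (by linarith)
    simp only [mul_zero] at h
    linarith
  · -- f m0 > 0
    apply iter_core m0 (M0 * (m0 + d + 1) ^ α) β σ d f
      (by positivity) hβ0 hσ hd hF hf_nonneg hf_mono
    · -- capped iteration hypothesis
      intro ℓ m hm hmℓ hℓd
      refine le_trans (hiter ℓ m hm hmℓ) ?_
      have hℓm : 0 < ℓ - m := by linarith
      have hpow : (ℓ + 1) ^ α ≤ (m0 + d + 1) ^ α :=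
        Real.rpow_le_rpow (by linarith) (by linarith) hα
      have hfm : 0 ≤ f m ^ σ := Real.rpow_nonneg (hf_nonneg m hm) σ
      apply mul_le_mul_of_nonneg_right _ hfm
      apply div_le_div_of_nonneg_right ?_ (by positivity)
      exact mul_le_mul_of_nonneg_left hpow hM0
    · -- the key algebraic inequality
      set F := f m0 with hFdef
      -- Step A : m0 + d + 1 ≤ K^2 * d
      have hKsq : K ^ (2:ℝ) = K * K := by
        rw [show (2:ℝ) = ((2:ℕ):ℝ) by norm_num, Real.rpow_natCast]; ring
      have hdK : m0 + d + 1 ≤ K ^ (2:ℝ) * d := by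
        rw [hKsq, hddef, hKdef]
        have haa : (0:ℝ) ≤ ((m0+M0+2)*(m0+M0+2) - 1) * D0 := by
          apply mul_nonneg _ hD0nn
          nlinarith
        nlinarith [haa, hm0, hM0, sq_nonneg (m0+M0), mul_nonneg hm0 hM0]
      -- Step B
      have hB : (m0 + d + 1) ^ α ≤ K ^ (2*α) * d ^ α := by
        calc (m0 + d + 1) ^ α ≤ (K ^ (2:ℝ) * d) ^ α :=
              Real.rpow_le_rpow (by linarith) hdK hα
          _ = (K ^ (2:ℝ)) ^ α * d ^ α := Real.mul_rpow (by positivity) hd.le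
          _ = K ^ (2*α) * d ^ α := by rw [← Real.rpow_mul hK0.le]
      -- Step C
      have hC2 : (2:ℝ) ^ (β*σ/(σ-1)) ≤ K ^ (β*σ/(σ-1)) :=
        Real.rpow_le_rpow (by norm_num) hK2 (by positivity)
      have hFσ1 : (0:ℝ) ≤ F ^ (σ-1) := Real.rpow_nonneg hF.le _
      have hstep1 : M0 * (m0 + d + 1) ^ α * F ^ (σ-1) * 2 ^ (β*σ/(σ-1))
          ≤ (K * (K ^ (2*α) * d ^ α)) * F ^ (σ-1) * K ^ (β*σ/(σ-1)) := by
        apply mul_le_mul _ hC2 (by positivity) (by positivity)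
        apply mul_le_mul_of_nonneg_right _ hFσ1
        exact mul_le_mul (by linarith) hB (by positivity) hK0.le
      have hstep2 : (K * (K ^ (2*α) * d ^ α)) * F ^ (σ-1) * K ^ (β*σ/(σ-1))
          = K ^ E1 * F ^ (σ-1) * d ^ α := by
        have e1 : K * K ^ (2*α) * K ^ (β*σ/(σ-1)) = K ^ E1 := by
          have e0 : K * K ^ (2*α) = K ^ (1 + 2*α) := by
            rw [Real.rpow_add hK0, Real.rpow_one]
          rw [e0, ← Real.rpow_add hK0]
          congr 1
          rw [hE1def]; field_simp; ring
        linear_combination (F ^ (σ-1) * d ^ α) * e1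
      -- main reduction
      have hmain : K ^ E1 * F ^ (σ-1) ≤ d ^ (β-α) := by
        by_cases h1 : K ^ E1 * F ^ (σ-1) ≤ 1
        · have h2 : (1:ℝ) ≤ d ^ (β-α) := by
            calc (1:ℝ) = 1 ^ (β-α) := (Real.one_rpow _).symm
              _ ≤ d ^ (β-α) := Real.rpow_le_rpow (by norm_num) (by linarith) hβα.le
          linarith
        · push_neg at h1
          have hKE1 : 0 < K ^ E1 := Real.rpow_pos_of_pos hK0 _
          have h5 : K ^ (-E1) < F ^ (σ-1) := by
            rw [Real.rpow_neg hK0.le, inv_eq_one_div, div_lt_iff₀ hKE1, mul_comm]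
            exact h1
          have hfge : K ^ (-(E1/(σ-1))) ≤ F := by
            have h7 := Real.rpow_le_rpow (Real.rpow_nonneg hK0.le _) h5.le
              (by positivity : (0:ℝ) ≤ 1/(σ-1))
            rw [← Real.rpow_mul hK0.le, ← Real.rpow_mul hF.le] at h7
            have e2 : (σ-1) * (1/(σ-1)) = 1 := by field_simp
            rw [e2, Real.rpow_one] at h7
            have e3 : -E1 * (1/(σ-1)) = -(E1/(σ-1)) := by ring
            rwa [e3] at h7
          have hD0pow : D0 ^ (β-α) = X := by
            rw [hD0def, ← Real.rpow_mul hXnn, one_div, inv_mul_cancel₀ hβα.ne',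
              Real.rpow_one]
          have hdpow : D0 ^ (β-α) ≤ d ^ (β-α) :=
            Real.rpow_le_rpow hD0nn (by rw [hddef]; linarith) hβα.le
          have hFσ : F ^ σ = F ^ (σ-1) * F := by
            rw [← Real.rpow_add_one hF.ne', sub_add_cancel]
          have hX2 : K ^ E1 * F ^ (σ-1) ≤ X := by
            rw [hXdef, hFσ]
            have h8 : K ^ E1 ≤ F * K ^ (E1*σ/(σ-1)) := by
              calc K ^ E1 = K ^ (-(E1/(σ-1))) * K ^ (E1*σ/(σ-1)) := by
                    rw [← Real.rpow_add hK0]; congr 1; field_simp; ring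
                _ ≤ F * K ^ (E1*σ/(σ-1)) :=
                    mul_le_mul_of_nonneg_right hfge (Real.rpow_nonneg hK0.le _)
            calc K ^ E1 * F ^ (σ-1) ≤ (F * K ^ (E1*σ/(σ-1))) * F ^ (σ-1) :=
                  mul_le_mul_of_nonneg_right h8 hFσ1
              _ ≤ 2 * (F ^ (σ-1) * F) * K ^ (E1*σ/(σ-1)) := by
                  nlinarith [mul_nonneg (mul_nonneg hF.le hFσ1)
                    (Real.rpow_nonneg hK0.le (E1*σ/(σ-1)))]
          linarith [hX2, hD0pow ▸ hdpow]
      calc M0 * (m0 + d + 1) ^ α * F ^ (σ-1) * 2 ^ (β*σ/(σ-1))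
          ≤ K ^ E1 * F ^ (σ-1) * d ^ α := by rw [← hstep2]; exact hstep1
        _ ≤ d ^ (β-α) * d ^ α := mul_le_mul_of_nonneg_right hmain (by positivity)
        _ = d ^ β := by
            rw [← Real.rpow_add hd]; norm_num
end

section
/- Let b : ℝ³ → ℝ³ be C¹ and for a_i ∈ {−1,0,1} set b̃ = a1 b¹ + a2 b² + a3 b³. Then there exists a universal constant C such that at every point, |b|² |∇b|² ≤ C Σ |∇(b̃²)|², where the sum runs over the seven choices (1,0,1), (1,0,−1), (1,1,0), (0,1,1), (1,1,1), (1,−1,0), (0,1,−1). -/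
noncomputable section

abbrev E3 := EuclideanSpace ℝ (Fin 3)

/-- Partial derivative `∂ᵢ f` of a scalar function on `ℝ³`. -/
def pd (i : Fin 3) (f : E3 → ℝ) (x : E3) : ℝ :=
  fderiv ℝ f x (EuclideanSpace.single i 1)

/-- The scalar combination `b̃(a₁,a₂,a₃) = a₁b¹ + a₂b² + a₃b³`. -/
def tl (a₁ a₂ a₃ : ℝ) (b : E3 → E3) (y : E3) : ℝ :=
  a₁ * b y 0 + a₂ * b y 1 + a₃ * b y 2

/-- `|∇g|² = ∑ᵢ (∂ᵢ g)²` for a scalar `g`. -/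
def gradSq (g : E3 → ℝ) (x : E3) : ℝ := ∑ i, (pd i g x) ^ 2

/-- The key pointwise algebraic inequality for vectors in `ℝ³`. -/
lemma alg_aux (u0 u1 u2 v0 v1 v2 : ℝ) :
    (u0^2+u1^2+u2^2)*(v0^2+v1^2+v2^2) ≤
      4*(((u0+u2)*(v0+v2))^2 + ((u0-u2)*(v0-v2))^2 + ((u0+u1)*(v0+v1))^2
        + ((u1+u2)*(v1+v2))^2 + ((u0+u1+u2)*(v0+v1+v2))^2
        + ((u0-u1)*(v0-v1))^2 + ((u1-u2)*(v1-v2))^2) := by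
  nlinarith [sq_nonneg (u0*v0+u1*v1+u2*v2), sq_nonneg (u0*v1-u1*v0), sq_nonneg (u0*v2-u2*v0),
    sq_nonneg (u1*v2-u2*v1), sq_nonneg (u0*v1+u1*v0), sq_nonneg (u0*v2+u2*v0), sq_nonneg (u1*v2+u2*v1),
    sq_nonneg (u0*v0), sq_nonneg (u1*v1), sq_nonneg (u2*v2),
    sq_nonneg (u0*v0-u1*v1), sq_nonneg (u0*v0-u2*v2), sq_nonneg (u1*v1-u2*v2),
    sq_nonneg (u0*v0+u1*v1), sq_nonneg (u0*v0+u2*v2), sq_nonneg (u1*v1+u2*v2)]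

lemma alg_aux' (u0 u1 u2 v0 v1 v2 : ℝ) :
    (u0^2+u1^2+u2^2)*(v0^2+v1^2+v2^2) ≤
      (2*(1*u0+0*u1+1*u2)*(1*v0+0*v1+1*v2))^2
      + (2*(1*u0+0*u1+(-1)*u2)*(1*v0+0*v1+(-1)*v2))^2
      + (2*(1*u0+1*u1+0*u2)*(1*v0+1*v1+0*v2))^2
      + (2*(0*u0+1*u1+1*u2)*(0*v0+1*v1+1*v2))^2
      + (2*(1*u0+1*u1+1*u2)*(1*v0+1*v1+1*v2))^2
      + (2*(1*u0+(-1)*u1+0*u2)*(1*v0+(-1)*v1+0*v2))^2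
      + (2*(0*u0+1*u1+(-1)*u2)*(0*v0+1*v1+(-1)*v2))^2 := by
  calc (u0^2+u1^2+u2^2)*(v0^2+v1^2+v2^2)
      ≤ 4*(((u0+u2)*(v0+v2))^2 + ((u0-u2)*(v0-v2))^2 + ((u0+u1)*(v0+v1))^2
        + ((u1+u2)*(v1+v2))^2 + ((u0+u1+u2)*(v0+v1+v2))^2
        + ((u0-u1)*(v0-v1))^2 + ((u1-u2)*(v1-v2))^2) := alg_aux u0 u1 u2 v0 v1 v2
    _ = _ := by ring

lemma pd_tl_sq (b : E3 → E3) (hb : ContDiff ℝ 1 b) (x : E3) (a₁ a₂ a₃ : ℝ) (i : Fin 3) :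
    pd i (fun y => (tl a₁ a₂ a₃ b y) ^ 2) x
      = 2 * tl a₁ a₂ a₃ b x *
        (a₁ * pd i (fun y => b y 0) x + a₂ * pd i (fun y => b y 1) x + a₃ * pd i (fun y => b y 2) x) := by
  have hbd := hb.differentiable one_ne_zero
  have hdb : ∀ j : Fin 3, DifferentiableAt ℝ (fun y => b y j) x := by
    intro j
    exact ((EuclideanSpace.proj j : E3 →L[ℝ] ℝ).differentiableAt).comp x (hbd x)
  set F : Fin 3 → (E3 →L[ℝ] ℝ) := fun j => fderiv ℝ (fun y => b y j) x with hF
  have hL : HasFDerivAt (tl a₁ a₂ a₃ b) (a₁ • F 0 + a₂ • F 1 + a₃ • F 2) x := by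
    exact ((((hdb 0).hasFDerivAt.const_mul a₁).add ((hdb 1).hasFDerivAt.const_mul a₂)).add
      ((hdb 2).hasFDerivAt.const_mul a₃))
  have hL2 : HasFDerivAt (fun y => (tl a₁ a₂ a₃ b y) ^ 2)
      ((2 * tl a₁ a₂ a₃ b x) • (a₁ • F 0 + a₂ • F 1 + a₃ • F 2)) x := by
    have h := hL.mul hL
    have : (2 * tl a₁ a₂ a₃ b x) • (a₁ • F 0 + a₂ • F 1 + a₃ • F 2)
        = tl a₁ a₂ a₃ b x • (a₁ • F 0 + a₂ • F 1 + a₃ • F 2)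
          + tl a₁ a₂ a₃ b x • (a₁ • F 0 + a₂ • F 1 + a₃ • F 2) := by
      rw [two_mul, add_smul]
    rw [this]
    simp only [pow_two]
    exact h
  rw [pd, hL2.fderiv]
  simp [pd, hF, ContinuousLinearMap.add_apply, ContinuousLinearMap.smul_apply, smul_eq_mul,
    mul_add, mul_assoc]

/-- There is a universal constant `C` such that pointwise
`|b|²|∇b|² ≤ C ∑ |∇(b̃²)|²`, the sum running over the seven combinations
`(1,0,1), (1,0,−1), (1,1,0), (0,1,1), (1,1,1), (1,−1,0), (0,1,−1)`. -/
theorem stmt_6 :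
    ∃ C > (0:ℝ), ∀ b : E3 → E3, ContDiff ℝ 1 b → ∀ x : E3,
      (∑ j, (b x j) ^ 2) * (∑ i, ∑ j, (pd i (fun y => b y j) x) ^ 2)
        ≤ C * (gradSq (fun y => (tl 1 0 1 b y) ^ 2) x
          + gradSq (fun y => (tl 1 0 (-1) b y) ^ 2) x
          + gradSq (fun y => (tl 1 1 0 b y) ^ 2) x
          + gradSq (fun y => (tl 0 1 1 b y) ^ 2) x
          + gradSq (fun y => (tl 1 1 1 b y) ^ 2) x
          + gradSq (fun y => (tl 1 (-1) 0 b y) ^ 2) x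
          + gradSq (fun y => (tl 0 1 (-1) b y) ^ 2) x) := by
  refine ⟨1, one_pos, ?_⟩
  intro b hb x
  rw [one_mul]
  simp only [gradSq, pd_tl_sq b hb x]
  simp only [tl]
  rw [← Finset.sum_add_distrib, ← Finset.sum_add_distrib, ← Finset.sum_add_distrib,
    ← Finset.sum_add_distrib, ← Finset.sum_add_distrib, ← Finset.sum_add_distrib,
    Finset.mul_sum]
  apply Finset.sum_le_sum
  intro i _
  simp only [Fin.sum_univ_three]
  exact alg_aux' (b x 0) (b x 1) (b x 2)
    (pd i (fun y => b y 0) x) (pd i (fun y => b y 1) x) (pd i (fun y => b y 2) x)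

end
end
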